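/- arXiv:1105.1190 — 4 statements merged into one kernel-verified Lean document; each statement's English description precedes it below -/
import Mathlib

section
/- Let ū ∈ L²_c(Σ) with ū_z < 0 almost everywhere on Σ. Then the function R ↦ ‖T_R ū − ū‖²_{L²_c(Σ)} restricted to a compact set satisfies: for every compact set Σ₀ ⋐ Σ there exists C₁ > 0 such that ‖T_R ū − ū‖_{L²_c(Σ)} ≥ C₁ |R| for all |R| ≤ 1, provided |ū_z| is bounded away from zero on a neighborhood of Σ₀. -/
open MeasureTheory Real Set

/-!
On `S₀` the mean value theorem along the `z`-direction gives
`|ū(y, z - R) - ū(y, z)| ≥ m |R|`, and the weight is at least `e^{c a}` there. Integrating this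
pointwise bound over `S₀` gives `‖T_R ū - ū‖² ≥ e^{c a} |S₀| m² R²`.
-/

lemma mul_abs_sub_le_abs_image_sub_of_deriv_le_neg {g g' : ℝ → ℝ} {D : Set ℝ}
    (hD : Convex ℝ D) (hg : ∀ x ∈ D, HasDerivAt g (g' x) x) {m : ℝ}
    (hm : ∀ x ∈ D, g' x ≤ -m) {x y : ℝ} (hx : x ∈ D) (hy : y ∈ D) :
    m * |y - x| ≤ |g y - g x| := by
  wlog hxy : x ≤ y generalizing x y
  · rw [abs_sub_comm y, abs_sub_comm (g y)]
    exact this hy hx (le_of_not_ge hxy)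
  have hderiv : ∀ t ∈ interior D, deriv g t = g' t :=
    fun t ht ↦ (hg t (interior_subset ht)).deriv
  have hdecr : g y - g x ≤ -m * (y - x) :=
    hD.image_sub_le_mul_sub_of_deriv_le (fun t ht ↦ (hg t ht).continuousAt.continuousWithinAt)
      (fun t ht ↦ (hg t (interior_subset ht)).differentiableAt.differentiableWithinAt)
      (fun t ht ↦ (hderiv t ht).trans_le (hm t (interior_subset ht))) x hx y hy hxy
  rw [abs_of_nonneg (sub_nonneg.mpr hxy)]
  linarith [neg_abs_le (g y - g x)]

lemma mul_abs_le_abs_sub_shift_of_deriv_le_neg {g g' : ℝ → ℝ}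
    (hg : ∀ x, HasDerivAt g (g' x) x) {z m : ℝ} (hm : ∀ r, |r| ≤ 1 → g' (z - r) ≤ -m)
    {R : ℝ} (hR : |R| ≤ 1) :
    m * |R| ≤ |g (z - R) - g z| := by
  have hmem : ∀ r, |r| ≤ 1 → z - r ∈ Icc (z - 1) (z + 1) := fun r hr ↦ by
    constructor <;> linarith [abs_le.mp hr]
  have hbound : ∀ x ∈ Icc (z - 1) (z + 1), g' x ≤ -m := fun x hx ↦ by
    have h := hm (z - x) (abs_le.mpr ⟨by linarith [hx.2], by linarith [hx.1]⟩)
    rwa [sub_sub_cancel] at h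
  have h := mul_abs_sub_le_abs_image_sub_of_deriv_le_neg (convex_Icc _ _) (fun x _ ↦ hg x)
    hbound (hmem 0 (by simp)) (hmem R hR)
  simpa using h

lemma mul_measureReal_le_integral_of_le_on {X : Type*} [MeasurableSpace X] {μ : Measure X}
    {f : X → ℝ} {s : Set X} {C : ℝ} (hs : MeasurableSet s) (hμs : μ s ≠ ⊤)
    (hf : Integrable f μ) (hf_nonneg : ∀ x, 0 ≤ f x) (hC : ∀ x ∈ s, C ≤ f x) :
    C * μ.real s ≤ ∫ x, f x ∂μ :=
  (setIntegral_ge_of_const_le_real hs hμs hC hf.integrableOn).trans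
    (setIntegral_le_integral hf (Filter.Eventually.of_forall hf_nonneg))

theorem stmt_2_general {Ω : Type*} [MeasurableSpace Ω] (μ : Measure Ω)
    (c : ℝ) (hc : 0 < c) (ubar ubarz : Ω × ℝ → ℝ)
    (hderiv : ∀ y z, HasDerivAt (fun z' => ubar (y, z')) (ubarz (y, z)) z)
    (S₀ : Set (Ω × ℝ)) (hS₀ : MeasurableSet S₀)
    (hpos : 0 < (μ.prod (volume : Measure ℝ)) S₀)
    (hfin : (μ.prod (volume : Measure ℝ)) S₀ < ⊤)
    (a b : ℝ) (hab : ∀ p ∈ S₀, a ≤ p.2 ∧ p.2 ≤ b)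
    (m : ℝ) (hm : 0 < m)
    (hlow : ∀ p ∈ S₀, ∀ r : ℝ, |r| ≤ 1 → ubarz (p.1, p.2 - r) ≤ -m)
    (hInt : ∀ R : ℝ, Integrable
      (fun p : Ω × ℝ => Real.exp (c * p.2) * (ubar (p.1, p.2 - R) - ubar p)^2)
      (μ.prod (volume : Measure ℝ))) :
    ∃ C₁ > 0, ∀ R : ℝ, |R| ≤ 1 →
      C₁ * |R| ≤
        Real.sqrt (∫ p : Ω × ℝ, Real.exp (c * p.2) * (ubar (p.1, p.2 - R) - ubar p)^2
          ∂(μ.prod (volume : Measure ℝ))) := by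
  set ν := μ.prod (volume : Measure ℝ)
  have hνS₀ : 0 < ν.real S₀ := ENNReal.toReal_pos hpos.ne' hfin.ne
  refine ⟨m * √(exp (c * a) * ν.real S₀), by positivity, fun R hR ↦ ?_⟩
  have hpointwise : ∀ p ∈ S₀,
      exp (c * a) * (m * R) ^ 2 ≤ exp (c * p.2) * (ubar (p.1, p.2 - R) - ubar p) ^ 2 := by
    intro p hp
    have hweight : exp (c * a) ≤ exp (c * p.2) :=
      exp_le_exp.mpr (mul_le_mul_of_nonneg_left (hab p hp).1 hc.le)
    have hmvt : m * |R| ≤ |ubar (p.1, p.2 - R) - ubar p| :=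
      mul_abs_le_abs_sub_shift_of_deriv_le_neg (hderiv p.1) (hlow p hp) hR
    have hsq : (m * R) ^ 2 ≤ (ubar (p.1, p.2 - R) - ubar p) ^ 2 := by
      rw [← sq_abs, abs_mul, abs_of_pos hm, ← sq_abs (ubar _ - _)]
      exact pow_le_pow_left₀ (by positivity) hmvt 2
    exact mul_le_mul hweight hsq (sq_nonneg _) (exp_pos _).le
  have hintegral := mul_measureReal_le_integral_of_le_on hS₀ hfin.ne (hInt R)
    (fun p ↦ by positivity) hpointwise
  refine le_sqrt_of_sq_le ?_
  rw [mul_pow, mul_pow, sq_sqrt (by positivity), sq_abs]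
  linarith

/-- If `ū_z < 0` and `|ū_z(y, z − r)| ≥ m > 0` on a compact piece
`S₀` of the cylinder (of positive finite measure, with bounded z-coordinates),
then there is `C₁ > 0` with `‖T_R ū − ū‖_{L²_c} ≥ C₁ |R|` for all `|R| ≤ 1`. -/
theorem stmt_2 {Ω : Type*} [MeasurableSpace Ω] (μ : Measure Ω) [SigmaFinite μ]
    (c : ℝ) (hc : 0 < c) (ubar ubarz : Ω × ℝ → ℝ)
    (hubar : Measurable ubar) (hubarz : Measurable ubarz)
    (hderiv : ∀ y z, HasDerivAt (fun z' => ubar (y, z')) (ubarz (y, z)) z)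
    (hneg : ∀ p : Ω × ℝ, ubarz p < 0)
    (S₀ : Set (Ω × ℝ)) (hS₀ : MeasurableSet S₀)
    (hpos : 0 < (μ.prod (volume : Measure ℝ)) S₀)
    (hfin : (μ.prod (volume : Measure ℝ)) S₀ < ⊤)
    (a b : ℝ) (hab : ∀ p ∈ S₀, a ≤ p.2 ∧ p.2 ≤ b)
    (m : ℝ) (hm : 0 < m)
    (hlow : ∀ p ∈ S₀, ∀ r : ℝ, |r| ≤ 1 → ubarz (p.1, p.2 - r) ≤ -m)
    (hInt : ∀ R : ℝ, Integrable
      (fun p : Ω × ℝ => Real.exp (c * p.2) * (ubar (p.1, p.2 - R) - ubar p)^2)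
      (μ.prod (volume : Measure ℝ))) :
    ∃ C₁ > 0, ∀ R : ℝ, |R| ≤ 1 →
      C₁ * |R| ≤
        Real.sqrt (∫ p : Ω × ℝ, Real.exp (c * p.2) * (ubar (p.1, p.2 - R) - ubar p)^2
          ∂(μ.prod (volume : Measure ℝ))) :=
  stmt_2_general μ c hc ubar ubarz hderiv S₀ hS₀ hpos hfin a b hab m hm hlow hInt
end

section
/- Let ψ ∈ H¹_c(Σ) (weight e^{cz}) on Σ = Ω × ℝ, vanishing appropriately on ∂Ω_±, and let ν₀ be the principal eigenvalue of −Δ_y − f_u(0,y) on Ω. Then ∫_Σ e^{cz}(|∇w|² − f_u(0,y) w²) dx ≥ (c²/4 + ν₀) ∫_Σ e^{cz} w² dx for all w ∈ H¹_c(Σ). -/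
/-!
Split `|∇w|² = |∇_y w|² + w_z²`. On each fibre `{y} × ℝ` the weighted Hardy inequality
`∫ e^{cz} w_z² ≥ (c²/4) ∫ e^{cz} w²` holds, and on each cross-section `Ω × {z}` the
variational characterization of `ν₀` bounds the transverse part; Fubini integrates both bounds
over `Σ`, and adding them gives the claim.

The Hardy inequality itself comes from `0 ≤ ∫ e^{cz} (f' + (c/2) f)²` once the cross term is
computed by integrating the derivative of `e^{cz} f²`, whose integral over `ℝ` vanishes.
-/

open MeasureTheory Real Set

section WeightedHardy

variable {c : ℝ} {f f' : ℝ → ℝ}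

lemma hasDerivAt_exp_mul_mul_sq {z : ℝ} (hd : HasDerivAt f (f' z) z) :
    HasDerivAt (fun z => exp (c * z) * f z ^ 2)
      (c * (exp (c * z) * f z ^ 2) + 2 * (exp (c * z) * (f z * f' z))) z := by
  have hexp : HasDerivAt (fun z => exp (c * z)) (exp (c * z) * c) z := by
    simpa using ((hasDerivAt_id z).const_mul c).exp
  have hsq : HasDerivAt (fun z => f z ^ 2) (2 * f z ^ 1 * f' z) z := hd.pow 2
  exact (hexp.mul hsq).congr_deriv (by ring)

lemma integral_exp_mul_mul_deriv (hd : ∀ z, HasDerivAt f (f' z) z)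
    (hf : Integrable fun z => exp (c * z) * f z ^ 2)
    (hff' : Integrable fun z => exp (c * z) * (f z * f' z)) :
    ∫ z, exp (c * z) * (f z * f' z) = -(c / 2) * ∫ z, exp (c * z) * f z ^ 2 := by
  have hzero := integral_eq_zero_of_hasDerivAt_of_integrable
    (fun z => hasDerivAt_exp_mul_mul_sq (c := c) (hd z))
    ((hf.const_mul c).add (hff'.const_mul 2)) hf
  rw [integral_add (hf.const_mul c) (hff'.const_mul 2), integral_const_mul,
    integral_const_mul] at hzero
  linarith

theorem weighted_hardy (hd : ∀ z, HasDerivAt f (f' z) z)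
    (hint : Integrable fun z => exp (c * z) * (f z ^ 2 + f' z ^ 2)) :
    c ^ 2 / 4 * ∫ z, exp (c * z) * f z ^ 2 ≤ ∫ z, exp (c * z) * f' z ^ 2 := by
  have hf' : Measurable f' := by
    simpa only [funext fun z => (hd z).deriv] using measurable_deriv f
  have hfc : Continuous f := continuous_iff_continuousAt.2 fun z => (hd z).continuousAt
  have dominated : ∀ g : ℝ → ℝ, Measurable g → (∀ z, |g z| ≤ f z ^ 2 + f' z ^ 2) →
      Integrable fun z => exp (c * z) * g z := by
    refine fun g hg hbound => hint.mono' (by fun_prop) (Filter.Eventually.of_forall fun z => ?_)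
    rw [norm_mul, norm_of_nonneg (exp_pos _).le, norm_eq_abs]
    exact mul_le_mul_of_nonneg_left (hbound z) (exp_pos _).le
  have hf := dominated (fun z => f z ^ 2) (by fun_prop) fun z => by
    rw [abs_of_nonneg (sq_nonneg _)]; nlinarith [sq_nonneg (f' z)]
  have hf'2 := dominated (fun z => f' z ^ 2) (by fun_prop) fun z => by
    rw [abs_of_nonneg (sq_nonneg _)]; nlinarith [sq_nonneg (f z)]
  have hff' := dominated (fun z => f z * f' z) (by fun_prop) fun z => by
    rw [abs_mul]; nlinarith [sq_nonneg (|f z| - |f' z|), sq_abs (f z), sq_abs (f' z)]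
  have hcross := hff'.const_mul (-c)
  have hf2 := hf.const_mul (c ^ 2 / 4)
  have hsquare : ∫ z, (-c * (exp (c * z) * (f z * f' z)) - c ^ 2 / 4 * (exp (c * z) * f z ^ 2))
      ≤ ∫ z, exp (c * z) * f' z ^ 2 :=
    integral_mono (hcross.sub hf2) hf'2 fun z => by
      have := mul_le_mul_of_nonneg_left (sq_nonneg (f' z + c / 2 * f z)) (exp_pos (c * z)).le
      dsimp only
      nlinarith
  rw [integral_sub hcross hf2, integral_const_mul, integral_const_mul,
    integral_exp_mul_mul_deriv hd hf hff'] at hsquare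
  linarith

end WeightedHardy

section Fubini

variable {α β : Type*} [MeasurableSpace α] [MeasurableSpace β] {μ : Measure α} {ν : Measure β}
  [SFinite μ] [SFinite ν] {F H : α × β → ℝ}

lemma const_mul_integral_prod_le_of_forall_left (a : ℝ) (hF : Integrable F (μ.prod ν))
    (hH : Integrable H (μ.prod ν)) (h : ∀ x, a * ∫ y, F (x, y) ∂ν ≤ ∫ y, H (x, y) ∂ν) :
    a * ∫ p, F p ∂μ.prod ν ≤ ∫ p, H p ∂μ.prod ν := by
  rw [integral_prod _ hF, integral_prod _ hH, ← integral_const_mul]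
  exact integral_mono (hF.integral_prod_left.const_mul a) hH.integral_prod_left h

lemma const_mul_integral_prod_le_of_forall_right (a : ℝ) (hF : Integrable F (μ.prod ν))
    (hH : Integrable H (μ.prod ν)) (h : ∀ y, a * ∫ x, F (x, y) ∂μ ≤ ∫ x, H (x, y) ∂μ) :
    a * ∫ p, F p ∂μ.prod ν ≤ ∫ p, H p ∂μ.prod ν := by
  rw [integral_prod_symm _ hF, integral_prod_symm _ hH, ← integral_const_mul]
  exact integral_mono (hF.integral_prod_right.const_mul a) hH.integral_prod_right h

end Fubini

/-- Here `G p` stands for `|∇_y w|²(p)`, `wz` for `∂_z w` and `q y` for `f_u(0,y)`; `hν₀` is the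
variational characterization of `ν₀` applied to each cross-section `w(·, z)`. -/
theorem stmt_7_general {Ω : Type*} [MeasurableSpace Ω] (μ : Measure Ω) [SigmaFinite μ]
    (c ν₀ : ℝ)
    (w wz G : Ω × ℝ → ℝ) (q : Ω → ℝ)
    (hderiv : ∀ y z, HasDerivAt (fun z' => w (y, z')) (wz (y, z)) z)
    (hIntG : Integrable (fun p : Ω × ℝ => Real.exp (c * p.2) * G p)
      (μ.prod (volume : Measure ℝ)))
    (hIntq : Integrable (fun p : Ω × ℝ => Real.exp (c * p.2) * (q p.1 * (w p)^2))
      (μ.prod (volume : Measure ℝ)))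
    (hIntz : Integrable (fun p : Ω × ℝ => Real.exp (c * p.2) * (wz p)^2)
      (μ.prod (volume : Measure ℝ)))
    (hIntw : Integrable (fun p : Ω × ℝ => Real.exp (c * p.2) * (w p)^2)
      (μ.prod (volume : Measure ℝ)))
    (hH1y : ∀ y, Integrable (fun z => Real.exp (c * z) * ((w (y, z))^2 + (wz (y, z))^2))
      (volume : Measure ℝ))
    (hν₀ : ∀ z : ℝ, ν₀ * ∫ y, (w (y, z))^2 ∂μ ≤ ∫ y, (G (y, z) - q y * (w (y, z))^2) ∂μ) :
    (c^2 / 4 + ν₀) * ∫ p : Ω × ℝ, Real.exp (c * p.2) * (w p)^2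
        ∂(μ.prod (volume : Measure ℝ)) ≤
      ∫ p : Ω × ℝ, Real.exp (c * p.2) * (G p + (wz p)^2 - q p.1 * (w p)^2)
        ∂(μ.prod (volume : Measure ℝ)) := by
  have hIntGq : Integrable (fun p : Ω × ℝ => exp (c * p.2) * (G p - q p.1 * w p ^ 2))
      (μ.prod volume) := by
    simpa only [Pi.sub_def, mul_sub] using hIntG.sub hIntq
  have hardy := const_mul_integral_prod_le_of_forall_left (c ^ 2 / 4) hIntw hIntz
    fun y => weighted_hardy (hderiv y) (hH1y y)
  have transverse := const_mul_integral_prod_le_of_forall_right ν₀ hIntw hIntGq fun z => by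
    simp only [integral_const_mul]
    linarith [mul_le_mul_of_nonneg_left (hν₀ z) (exp_pos (c * z)).le]
  have hsplit : ∫ p : Ω × ℝ, exp (c * p.2) * (G p + wz p ^ 2 - q p.1 * w p ^ 2) ∂μ.prod volume
      = ∫ p : Ω × ℝ, exp (c * p.2) * (G p - q p.1 * w p ^ 2) ∂μ.prod volume
        + ∫ p : Ω × ℝ, exp (c * p.2) * wz p ^ 2 ∂μ.prod volume := by
    rw [← integral_add hIntGq hIntz]
    congr 1 with p; ring
  rw [hsplit]
  linarith

/-- If the cross-sectional quadratic form satisfies the eigenvalue bound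
`∫_Ω(|∇_y w|² − f_u(0,y)w²)dy ≥ ν₀ ∫_Ω w² dy` for each `z` (definition of `ν₀`), then for
`w ∈ H¹_c(Σ)`, `∫_Σ e^{cz}(|∇w|² − f_u(0,y)w²)dx ≥ (c²/4 + ν₀)∫_Σ e^{cz} w² dx`, where
`|∇w|² = |∇_y w|² + w_z²` (here `G p` stands for `|∇_y w|²(p)` and `q y = f_u(0,y)`). -/
theorem stmt_7 {Ω : Type*} [MeasurableSpace Ω] (μ : Measure Ω) [SigmaFinite μ]
    (c ν₀ : ℝ) (hc : 0 < c)
    (w wz G : Ω × ℝ → ℝ) (q : Ω → ℝ)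
    (hw : Measurable w) (hwz : Measurable wz) (hG : Measurable G) (hq : Measurable q)
    (hGpos : ∀ p, 0 ≤ G p)
    (hderiv : ∀ y z, HasDerivAt (fun z' => w (y, z')) (wz (y, z)) z)
    (hIntG : Integrable (fun p : Ω × ℝ => Real.exp (c * p.2) * G p)
      (μ.prod (volume : Measure ℝ)))
    (hIntq : Integrable (fun p : Ω × ℝ => Real.exp (c * p.2) * (q p.1 * (w p)^2))
      (μ.prod (volume : Measure ℝ)))
    (hIntz : Integrable (fun p : Ω × ℝ => Real.exp (c * p.2) * (wz p)^2)
      (μ.prod (volume : Measure ℝ)))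
    (hIntw : Integrable (fun p : Ω × ℝ => Real.exp (c * p.2) * (w p)^2)
      (μ.prod (volume : Measure ℝ)))
    (hH1y : ∀ y, Integrable (fun z => Real.exp (c * z) * ((w (y, z))^2 + (wz (y, z))^2))
      (volume : Measure ℝ))
    (hν₀ : ∀ z : ℝ, ν₀ * ∫ y, (w (y, z))^2 ∂μ ≤ ∫ y, (G (y, z) - q y * (w (y, z))^2) ∂μ) :
    (c^2 / 4 + ν₀) * ∫ p : Ω × ℝ, Real.exp (c * p.2) * (w p)^2
        ∂(μ.prod (volume : Measure ℝ)) ≤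
      ∫ p : Ω × ℝ, Real.exp (c * p.2) * (G p + (wz p)^2 - q p.1 * (w p)^2)
        ∂(μ.prod (volume : Measure ℝ)) :=
  stmt_7_general μ c ν₀ w wz G q hderiv hIntG hIntq hIntz hIntw hH1y hν₀
end

section
/- Let u ∈ L^∞(Σ) ∩ L²_c(Σ) with ‖∇u‖_{L^∞} ≤ L and u ≥ 0. Then for every z₀ ∈ ℝ, ‖u‖^{n+2}_{C_b(Ω̄ × [z₀,∞))} ≤ C(n, L, |Ω|) ‖u‖²_{L²_c(Σ)} e^{−c z₀}, i.e., the sup-norm of u on the right half-cylinder is controlled by its weighted L² norm and the weight at z₀. -/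
/-!
If `|u(p)| = M > 0` and `u` is `L`-Lipschitz, then `|u| ≥ M / 2` on the box
`(B(p₁, r) ∩ Ω) × (p₂ - r, p₂ + r)` with `r = a M` comparable to `M`. The density of `Ω` makes
the measure of that box at least `2 θ r^(m+1)`, and the weight there is at least `e^{c (z₀ - r₀)}`,
so the weighted `L²` norm of `u` is at least a constant times `M^(m+3) e^{c z₀}`.
-/

open MeasureTheory Real Set Metric
open scoped NNReal ENNReal

theorem LipschitzOnWith.half_abs_le_abs {α : Type*} [PseudoMetricSpace α] {f : α → ℝ} {K : ℝ≥0}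
    {s : Set α} (hf : LipschitzOnWith K f s) {x y : α} (hx : x ∈ s) (hy : y ∈ s) {r : ℝ}
    (hxy : dist y x ≤ r) (hKr : K * r ≤ |f x| / 2) : |f x| / 2 ≤ |f y| := by
  have hfyx : |f y - f x| ≤ K * r :=
    (hf.dist_le_mul y hy x hx).trans (mul_le_mul_of_nonneg_left hxy K.coe_nonneg)
  linarith [abs_sub_abs_le_abs_sub (f x) (f y), abs_sub_comm (f x) (f y)]

section WeightedCylinder

variable {E : Type*} [PseudoMetricSpace E] [MeasureSpace E]

theorem volume_ball_inter_prod_ball (Ω : Set E) (p : E × ℝ) (r : ℝ) :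
    volume ((ball p.1 r ∩ Ω) ×ˢ ball p.2 r) = volume (ball p.1 r ∩ Ω) * ENNReal.ofReal (2 * r) := by
  rw [Measure.volume_eq_prod, Measure.prod_prod, Real.volume_ball]

theorem exp_mul_sq_mul_volume_le_setIntegral [OpensMeasurableSpace E] {Ω : Set E}
    (hΩ : MeasurableSet Ω) {u : E × ℝ → ℝ} {K : ℝ≥0} {c r : ℝ} (hc : 0 ≤ c)
    (hLip : LipschitzOnWith K u (Ω ×ˢ univ))
    (hInt : IntegrableOn (fun q => exp (c * q.2) * u q ^ 2) (Ω ×ˢ univ))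
    {p : E × ℝ} (hp : p.1 ∈ Ω) (hr : 0 ≤ r) (hKr : K * r ≤ |u p| / 2)
    (hfin : volume (ball p.1 r ∩ Ω) ≠ ∞) :
    exp (c * (p.2 - r)) * (|u p| / 2) ^ 2 * ((volume (ball p.1 r ∩ Ω)).toReal * (2 * r)) ≤
      ∫ q in Ω ×ˢ univ, exp (c * q.2) * u q ^ 2 := by
  set S := (ball p.1 r ∩ Ω) ×ˢ ball p.2 r
  have hSsub : S ⊆ Ω ×ˢ univ := prod_mono inter_subset_right (subset_univ _)
  have hS : MeasurableSet S := (measurableSet_ball.inter hΩ).prod measurableSet_ball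
  have hSfin : volume S ≠ ∞ := by
    rw [volume_ball_inter_prod_ball]
    exact ENNReal.mul_ne_top hfin ENNReal.ofReal_ne_top
  have hlow : ∀ q ∈ S, exp (c * (p.2 - r)) * (|u p| / 2) ^ 2 ≤ exp (c * q.2) * u q ^ 2 := by
    rintro q ⟨⟨hq₁, hqΩ⟩, hq₂⟩
    have hdist : dist q p ≤ r := by
      rw [Prod.dist_eq]
      exact max_le (mem_ball.mp hq₁).le (mem_ball.mp hq₂).le
    have hu : |u p| / 2 ≤ |u q| :=
      hLip.half_abs_le_abs ⟨hp, mem_univ _⟩ ⟨hqΩ, mem_univ _⟩ hdist hKr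
    have hz : p.2 - r ≤ q.2 := by linarith [(abs_lt.mp (mem_ball.mp hq₂)).1, Real.dist_eq q.2 p.2]
    rw [← sq_abs (u q)]
    gcongr
  calc exp (c * (p.2 - r)) * (|u p| / 2) ^ 2 * ((volume (ball p.1 r ∩ Ω)).toReal * (2 * r))
      = exp (c * (p.2 - r)) * (|u p| / 2) ^ 2 * volume.real S := by
        rw [measureReal_def, volume_ball_inter_prod_ball, ENNReal.toReal_mul,
          ENNReal.toReal_ofReal (by positivity)]
    _ ≤ ∫ q in S, exp (c * q.2) * u q ^ 2 :=
        setIntegral_ge_of_const_le_real hS hSfin hlow (hInt.mono_set hSsub)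
    _ ≤ ∫ q in Ω ×ˢ univ, exp (c * q.2) * u q ^ 2 :=
        setIntegral_mono_set hInt (.of_forall fun q => by positivity) hSsub.eventuallyLE

end WeightedCylinder

theorem stmt_11_general (m : ℕ) (Ω : Set (EuclideanSpace ℝ (Fin m)))
    (hΩopen : IsOpen Ω)
    (hdensity : ∃ θ > (0:ℝ), ∃ r₀ > (0:ℝ), ∀ y ∈ Ω, ∀ r : ℝ, 0 < r → r ≤ r₀ →
      θ * r ^ m ≤ (volume (Metric.ball y r ∩ Ω)).toReal)
    (c L B : ℝ) (hc : 0 < c) (hL : 0 < L) (hB : 0 < B)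
    (u : EuclideanSpace ℝ (Fin m) × ℝ → ℝ)
    (hbdd : ∀ p, |u p| ≤ B)
    (hLip : LipschitzOnWith (Real.toNNReal L) u (Ω ×ˢ (univ : Set ℝ)))
    (hInt : IntegrableOn (fun p => Real.exp (c * p.2) * (u p)^2)
      (Ω ×ˢ (univ : Set ℝ)) volume) :
    ∃ C > (0:ℝ), ∀ z₀ : ℝ, ∀ p ∈ Ω ×ˢ Ici z₀,
      (u p) ^ (m + 3) ≤
        C * (∫ q in Ω ×ˢ (univ : Set ℝ), Real.exp (c * q.2) * (u q)^2) *
          Real.exp (-c * z₀) := by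
  obtain ⟨θ, hθ, r₀, hr₀, hden⟩ := hdensity
  set a := min (1 / (2 * L)) (r₀ / B)
  have ha : 0 < a := lt_min (by positivity) (by positivity)
  refine ⟨2 * exp (c * r₀) / (θ * a ^ (m + 1)), by positivity, fun z₀ p ⟨hp, hz⟩ => ?_⟩
  set I := ∫ q in Ω ×ˢ (univ : Set ℝ), exp (c * q.2) * u q ^ 2
  have hI : 0 ≤ I := setIntegral_nonneg (hΩopen.measurableSet.prod .univ) fun q _ => by positivity
  refine (le_abs_self _).trans ((abs_pow (u p) _).trans_le ?_)
  obtain hM | hM := (abs_nonneg (u p)).eq_or_lt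
  · rw [← hM, zero_pow (by omega)]
    positivity
  set M := |u p|
  have hr : a * M ≤ r₀ := calc
    a * M ≤ r₀ / B * B := mul_le_mul (min_le_right _ _) (hbdd p) hM.le (by positivity)
    _ = r₀ := div_mul_cancel₀ _ hB.ne'
  have hLr : (L.toNNReal : ℝ) * (a * M) ≤ M / 2 := by
    rw [Real.coe_toNNReal L hL.le]
    calc L * (a * M) ≤ L * (1 / (2 * L) * M) := by gcongr; exact min_le_left _ _
      _ = M / 2 := by field_simp
  have hmass := exp_mul_sq_mul_volume_le_setIntegral hΩopen.measurableSet hc.le hLip hInt hp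
    (by positivity) hLr (measure_ball_lt_top.trans_le' (measure_mono inter_subset_left)).ne
  have hvol := hden p.1 hp (a * M) (by positivity) hr
  have hweight : exp (c * (z₀ - r₀)) ≤ exp (c * (p.2 - a * M)) := by
    gcongr
    linarith [show z₀ ≤ p.2 from hz]
  calc M ^ (m + 3)
      = 2 * exp (c * r₀) / (θ * a ^ (m + 1)) *
          (exp (c * (z₀ - r₀)) * (M / 2) ^ 2 * (θ * (a * M) ^ m * (2 * (a * M)))) *
          exp (-c * z₀) := by
        rw [neg_mul, exp_neg, mul_sub, exp_sub]
        field_simp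
        ring
    _ ≤ 2 * exp (c * r₀) / (θ * a ^ (m + 1)) * I * exp (-c * z₀) := by
        gcongr
        exact hmass.trans' (by gcongr)

/-- Interpolation estimate: if `u ≥ 0` on `Σ = Ω × ℝ ⊂ ℝ^{m} × ℝ` is
`L`-Lipschitz and `Ω` (bounded, open, with the measure-density property coming from its
`C²` boundary), then there is `C > 0` such that for every `z₀` and every point of
`Ω̄ × [z₀,∞)`, `u(p)^{n+2} ≤ C ‖u‖²_{L²_c(Σ)} e^{−c z₀}` with `n = m + 1`. -/
theorem stmt_11 (m : ℕ) (Ω : Set (EuclideanSpace ℝ (Fin m)))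
    (hΩopen : IsOpen Ω) (hΩbdd : Bornology.IsBounded Ω) (hΩne : Ω.Nonempty)
    (hdensity : ∃ θ > (0:ℝ), ∃ r₀ > (0:ℝ), ∀ y ∈ Ω, ∀ r : ℝ, 0 < r → r ≤ r₀ →
      θ * r ^ m ≤ (volume (Metric.ball y r ∩ Ω)).toReal)
    (c L B : ℝ) (hc : 0 < c) (hL : 0 < L) (hB : 0 < B)
    (u : EuclideanSpace ℝ (Fin m) × ℝ → ℝ)
    (hu : Measurable u) (hbdd : ∀ p, |u p| ≤ B)
    (hpos : ∀ p ∈ Ω ×ˢ (univ : Set ℝ), 0 ≤ u p)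
    (hLip : LipschitzOnWith (Real.toNNReal L) u (Ω ×ˢ (univ : Set ℝ)))
    (hInt : IntegrableOn (fun p => Real.exp (c * p.2) * (u p)^2)
      (Ω ×ˢ (univ : Set ℝ)) volume) :
    ∃ C > (0:ℝ), ∀ z₀ : ℝ, ∀ p ∈ Ω ×ˢ Ici z₀,
      (u p) ^ (m + 3) ≤
        C * (∫ q in Ω ×ˢ (univ : Set ℝ), Real.exp (c * q.2) * (u q)^2) *
          Real.exp (-c * z₀) :=
  stmt_11_general m Ω hΩopen hdensity c L B hc hL hB u hbdd hLip hInt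
end

section
/- Monotonicity of translate distance: for ū ∈ L²_c(Σ) with ū_z ≤ 0 and ū_z not identically zero, the function R ↦ ‖T_R ū − ū‖²_{L²_c(Σ)} is nondecreasing in |R|; in particular ‖T_R ū − ū‖_{L²_c(Σ)} ≥ ‖T_{sgn(R)} ū − ū‖_{L²_c(Σ)} for all |R| ≥ 1. -/
open MeasureTheory Real Set

/-! For `R₁` between `0` and `R₂`, the point `z - R₁` lies between `z` and `z - R₂`, so by
monotonicity of `ū(y, ·)` the value `ū(y, z - R₁)` lies between `ū(y, z)` and `ū(y, z - R₂)`.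
Hence the integrand of `‖T_R ū − ū‖²` is pointwise monotone in `R` along each ray from `0`,
and so is its integral. Integrability comes from `(a - b)² ≤ 2a² + 2b²` and the fact that
translation by `R` rescales the weighted norm by `e^{cR}`. -/

theorem Antitone.sq_sub_le_sq_sub_of_mem_uIcc {f : ℝ → ℝ} (hf : Antitone f) {x y w : ℝ}
    (hy : y ∈ uIcc x w) : (f y - f x) ^ 2 ≤ (f w - f x) ^ 2 :=
  sq_le_sq.mpr (abs_sub_left_of_mem_uIcc (hf.mapsTo_uIcc hy))

theorem Real.sign_mem_uIcc_zero {R : ℝ} (hR : 1 ≤ |R|) : Real.sign R ∈ uIcc 0 R := by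
  rcases le_or_gt 0 R with h | h
  · rw [abs_of_nonneg h] at hR
    rw [Real.sign_of_pos (by linarith)]
    exact mem_uIcc_of_le zero_le_one hR
  · rw [abs_of_neg h] at hR
    rw [Real.sign_of_neg h]
    exact mem_uIcc_of_ge (by linarith) (by norm_num)

theorem integrable_mul_sub_sq {α : Type*} [MeasurableSpace α] {ν : Measure α} {w f g : α → ℝ}
    (hw : 0 ≤ w) (hwm : Measurable w) (hfm : Measurable f) (hgm : Measurable g)
    (hf : Integrable (fun x => w x * f x ^ 2) ν) (hg : Integrable (fun x => w x * g x ^ 2) ν) :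
    Integrable (fun x => w x * (f x - g x) ^ 2) ν := by
  refine ((hf.const_mul 2).add (hg.const_mul 2)).mono'
    (hwm.mul ((hfm.sub hgm).pow_const 2)).aestronglyMeasurable (.of_forall fun x => ?_)
  rw [Real.norm_of_nonneg (mul_nonneg (hw x) (sq_nonneg _))]
  simp only [Pi.add_apply]
  nlinarith [mul_nonneg (hw x) (sq_nonneg (f x + g x))]

section Translate

variable {Ω : Type*} [MeasurableSpace Ω] {μ : Measure Ω} [SFinite μ] {c : ℝ} {u : Ω × ℝ → ℝ}

theorem integrable_exp_mul_sq_comp_sub_snd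
    (hL2 : Integrable (fun p : Ω × ℝ => exp (c * p.2) * u p ^ 2) (μ.prod volume)) (R : ℝ) :
    Integrable (fun p : Ω × ℝ => exp (c * p.2) * u (p.1, p.2 - R) ^ 2) (μ.prod volume) := by
  have htranslate : MeasurePreserving (fun p : Ω × ℝ => (p.1, p.2 - R))
      (μ.prod volume) (μ.prod volume) :=
    (MeasurePreserving.id μ).prod (measurePreserving_sub_right volume R)
  have hshift : Integrable (fun p : Ω × ℝ => exp (c * (p.2 - R)) * u (p.1, p.2 - R) ^ 2)
      (μ.prod volume) :=
    (htranslate.integrable_comp hL2.aestronglyMeasurable).mpr hL2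
  refine (hshift.const_mul (exp (c * R))).congr (.of_forall fun p => ?_)
  simp only [← mul_assoc, ← exp_add]
  ring_nf

theorem integral_exp_mul_sq_translate_sub_mono (hu : Measurable u)
    (hmono : ∀ y : Ω, Antitone (fun z => u (y, z)))
    (hL2 : Integrable (fun p : Ω × ℝ => exp (c * p.2) * u p ^ 2) (μ.prod volume))
    {R₁ R₂ : ℝ} (hR : R₁ ∈ uIcc 0 R₂) :
    ∫ p : Ω × ℝ, exp (c * p.2) * (u (p.1, p.2 - R₁) - u p) ^ 2 ∂(μ.prod volume) ≤
      ∫ p : Ω × ℝ, exp (c * p.2) * (u (p.1, p.2 - R₂) - u p) ^ 2 ∂(μ.prod volume) := by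
  have hint : Integrable (fun p : Ω × ℝ => exp (c * p.2) * (u (p.1, p.2 - R₂) - u p) ^ 2)
      (μ.prod volume) :=
    integrable_mul_sub_sq (fun _ => (exp_pos _).le) (by fun_prop)
      (hu.comp (by fun_prop)) hu (integrable_exp_mul_sq_comp_sub_snd hL2 R₂) hL2
  refine integral_mono_of_nonneg (.of_forall fun p => by positivity) hint
    (.of_forall fun p => mul_le_mul_of_nonneg_left ?_ (exp_pos _).le)
  have hz : p.2 - R₁ ∈ uIcc p.2 (p.2 - R₂) := by
    simpa using mem_image_of_mem (fun r => p.2 - r) hR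
  exact (hmono p.1).sq_sub_le_sq_sub_of_mem_uIcc hz

end Translate

theorem stmt_17_general {Ω : Type*} [MeasurableSpace Ω] (μ : Measure Ω) [SigmaFinite μ]
    (c : ℝ) (ubar : Ω × ℝ → ℝ) (hubar : Measurable ubar)
    (hmono : ∀ y : Ω, Antitone (fun z => ubar (y, z)))
    (hL2 : Integrable (fun p : Ω × ℝ => Real.exp (c * p.2) * (ubar p)^2)
      (μ.prod (volume : Measure ℝ)))
    (d : ℝ → ℝ)
    (hd : ∀ R : ℝ, d R = ∫ p : Ω × ℝ,
      Real.exp (c * p.2) * (ubar (p.1, p.2 - R) - ubar p)^2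
      ∂(μ.prod (volume : Measure ℝ))) :
    (∀ R₁ R₂ : ℝ, 0 ≤ R₁ → R₁ ≤ R₂ → d R₁ ≤ d R₂) ∧
    (∀ R₁ R₂ : ℝ, R₂ ≤ R₁ → R₁ ≤ 0 → d R₁ ≤ d R₂) ∧
    (∀ R : ℝ, 1 ≤ |R| → d (Real.sign R) ≤ d R) := by
  have hd_mono {R₁ R₂ : ℝ} (hR : R₁ ∈ uIcc 0 R₂) : d R₁ ≤ d R₂ := by
    rw [hd, hd]
    exact integral_exp_mul_sq_translate_sub_mono hubar hmono hL2 hR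
  exact ⟨fun _ _ h₀ h₁₂ => hd_mono (mem_uIcc_of_le h₀ h₁₂),
    fun _ _ h₂₁ h₁₀ => hd_mono (mem_uIcc_of_ge h₂₁ h₁₀),
    fun _ hR => hd_mono (Real.sign_mem_uIcc_zero hR)⟩

/-- Monotonicity of the translate distance: for `ū ∈ L²_c(Σ)` monotone
nonincreasing in `z` (`ū_z ≤ 0`, not identically zero), `R ↦ ‖T_R ū − ū‖²_{L²_c}` is
nondecreasing in `|R|`; in particular for `|R| ≥ 1` it dominates its value at `sgn R`. -/
theorem stmt_17 {Ω : Type*} [MeasurableSpace Ω] (μ : Measure Ω) [SigmaFinite μ]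
    (c : ℝ) (hc : 0 < c) (ubar : Ω × ℝ → ℝ) (hubar : Measurable ubar)
    (hmono : ∀ y : Ω, Antitone (fun z => ubar (y, z)))
    (hnontriv : ∃ (y : Ω) (z₁ z₂ : ℝ), z₁ < z₂ ∧ ubar (y, z₂) < ubar (y, z₁))
    (hL2 : Integrable (fun p : Ω × ℝ => Real.exp (c * p.2) * (ubar p)^2)
      (μ.prod (volume : Measure ℝ)))
    (d : ℝ → ℝ)
    (hd : ∀ R : ℝ, d R = ∫ p : Ω × ℝ,
      Real.exp (c * p.2) * (ubar (p.1, p.2 - R) - ubar p)^2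
      ∂(μ.prod (volume : Measure ℝ))) :
    (∀ R₁ R₂ : ℝ, 0 ≤ R₁ → R₁ ≤ R₂ → d R₁ ≤ d R₂) ∧
    (∀ R₁ R₂ : ℝ, R₂ ≤ R₁ → R₁ ≤ 0 → d R₁ ≤ d R₂) ∧
    (∀ R : ℝ, 1 ≤ |R| → d (Real.sign R) ≤ d R) :=
  stmt_17_general μ c ubar hubar hmono hL2 d hd
end
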